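/- arXiv:2407.13979 — 4 statements merged into one kernel-verified Lean document; each statement's English description precedes it below -/
import Mathlib

section
/- For all nonnegative reals x_1, ..., x_n, we have ∑_{i=1}^n γ(x_i) ≤ √n · γ(∑_{i=1}^n x_i), where γ(x) = x for x < 1 and γ(x) = √x for x ≥ 1. -/
/-- `γ(x) = x` for `x < 1` and `γ(x) = √x` for `x ≥ 1`. -/
noncomputable def gamma (x : ℝ) : ℝ := if x < 1 then x else Real.sqrt x

/-!
Since `γ(x) = min(x, √x)`, it suffices to bound `∑ γ(xᵢ)` by both
`√n · ∑ xᵢ` and `√n · √(∑ xᵢ)`. The first holds because `γ(x) ≤ x` and `√n ≥ 1` once `n ≥ 1`;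
the second because `γ(x) ≤ √x` and, by Cauchy–Schwarz, `∑ √xᵢ ≤ √n · √(∑ xᵢ)`.
-/

open Finset Real

lemma gamma_eq_min_sqrt (x : ℝ) : gamma x = min x √x := by
  unfold gamma
  split_ifs with h
  · exact (min_eq_left (le_sqrt_self_iff.mpr h.le)).symm
  · exact (min_eq_right (sqrt_le_self_iff.mpr (Or.inr (not_lt.mp h)))).symm

lemma gamma_le_self (x : ℝ) : gamma x ≤ x :=
  (gamma_eq_min_sqrt x).trans_le (min_le_left _ _)

lemma gamma_le_sqrt (x : ℝ) : gamma x ≤ √x :=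
  (gamma_eq_min_sqrt x).trans_le (min_le_right _ _)

lemma sum_le_sqrt_card_mul_sum {ι : Type*} (s : Finset ι) {f : ι → ℝ} (hf : ∀ i, 0 ≤ f i) :
    ∑ i ∈ s, f i ≤ √(#s : ℝ) * ∑ i ∈ s, f i := by
  rcases s.eq_empty_or_nonempty with rfl | hs
  · simp
  have hcard : (1 : ℝ) ≤ √(#s : ℝ) := one_le_sqrt.mpr (by exact_mod_cast hs.card_pos)
  exact le_mul_of_one_le_left (sum_nonneg fun i _ => hf i) hcard

lemma sum_sqrt_le_sqrt_card_mul_sqrt_sum {ι : Type*} (s : Finset ι) {f : ι → ℝ}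
    (hf : ∀ i, 0 ≤ f i) : ∑ i ∈ s, √(f i) ≤ √(#s : ℝ) * √(∑ i ∈ s, f i) := by
  simpa using sum_sqrt_mul_sqrt_le s (fun _ => zero_le_one) hf

/-- For nonnegative reals `x₁, …, xₙ`, `∑ γ(xᵢ) ≤ √n · γ(∑ xᵢ)`. -/
theorem sum_gamma_le_sqrt_mul_gamma_sum (n : ℕ) (x : Fin n → ℝ) (hx : ∀ i, 0 ≤ x i) :
    ∑ i, gamma (x i) ≤ Real.sqrt n * gamma (∑ i, x i) := by
  rw [gamma_eq_min_sqrt, mul_min_of_nonneg _ _ (sqrt_nonneg _)]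
  refine le_min ?_ ?_
  · calc ∑ i, gamma (x i) ≤ ∑ i, x i := sum_le_sum fun i _ => gamma_le_self _
      _ ≤ √n * ∑ i, x i := by simpa using sum_le_sqrt_card_mul_sum univ hx
  · calc ∑ i, gamma (x i) ≤ ∑ i, √(x i) := sum_le_sum fun i _ => gamma_le_sqrt _
      _ ≤ √n * √(∑ i, x i) := by simpa using sum_sqrt_le_sqrt_card_mul_sqrt_sum univ hx
end

section
/- Let q_t ∈ {0,1} and r_t ∈ [0,1] be adapted processes on [T] with filtration (F_t), where r_t is F_{t-1}-measurable and P(q_t = 1 | F_{t-1}) ≥ r_t. Fix θ > 0 and let τ_θ be the first time t with R_t := ∑_{s≤t} r_s ≥ θ (or ∞). Then P(∑_{t=1}^{τ_θ} q_t ≥ 1) ≥ (1 - e^{-θ}) · P(τ_θ < ∞). -/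
/-!
Let `a_s` be the indicator of `s ≤ τ_θ`; it is `ℱ (s - 1)`-measurable. The process
`W_t = ∏_{s ≤ t} (1 - a_s q_s) exp (a_s r_s)` is a nonnegative supermartingale with `W_0 = 1`,
since `𝔼[(1 - a q) exp (a r) | ℱ (s - 1)] ≤ (1 - a r) exp (a r) ≤ 1`. If no success occurs up to
`τ_θ ∧ T`, then `W_T = exp (R_{τ_θ ∧ T})`, which is at least `e^θ` when `τ_θ < ∞` and at least `1`
in any case. Hence `(1 - e^{-θ}) 1{τ_θ < ∞} + e^{-θ} (1 - W_T)` is bounded by the indicator of a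
success, and `𝔼 W_T ≤ 1` gives the claim after taking expectations.
-/

open MeasureTheory

theorem one_sub_mul_exp_le_one (x : ℝ) : (1 - x) * Real.exp x ≤ 1 :=
  calc (1 - x) * Real.exp x ≤ Real.exp (-x) * Real.exp x :=
        mul_le_mul_of_nonneg_right (Real.one_sub_le_exp_neg x) (Real.exp_pos x).le
    _ = 1 := by rw [← Real.exp_add, neg_add_cancel, Real.exp_zero]

theorem mem_Icc_zero_one_of_eq_zero_or_eq_one {x : ℝ} (h : x = 0 ∨ x = 1) :
    x ∈ Set.Icc (0 : ℝ) 1 := by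
  rcases h with rfl | rfl <;> simp

section Expectation

variable {Ω : Type*} {m m0 : MeasurableSpace Ω} {μ : Measure Ω}

theorem integrable_of_mem_Icc [IsFiniteMeasure μ] {f : Ω → ℝ} {C : ℝ} (hf : Measurable f)
    (hfC : ∀ ω, f ω ∈ Set.Icc 0 C) : Integrable f μ :=
  .of_bound hf.aestronglyMeasurable C
    (.of_forall fun ω => by rw [Real.norm_of_nonneg (hfC ω).1]; exact (hfC ω).2)

theorem integral_mul_le_integral_mul_of_le_condExp (hm : m ≤ m0) [SigmaFinite (μ.trim hm)]
    {g q r : Ω → ℝ} {C : ℝ} (hg : Measurable[m] g) (hgC : ∀ ω, g ω ∈ Set.Icc 0 C)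
    (hq : Integrable q μ) (hr : Integrable r μ) (hrq : r ≤ᵐ[μ] μ[q | m]) :
    ∫ ω, g ω * r ω ∂μ ≤ ∫ ω, g ω * q ω ∂μ := by
  have hg_meas : AEStronglyMeasurable g μ := (hg.mono hm le_rfl).aestronglyMeasurable
  have hg_bdd : ∀ᵐ ω ∂μ, ‖g ω‖ ≤ C :=
    .of_forall fun ω => by rw [Real.norm_of_nonneg (hgC ω).1]; exact (hgC ω).2
  calc ∫ ω, g ω * r ω ∂μ ≤ ∫ ω, g ω * (μ[q | m]) ω ∂μ := by
        refine integral_mono_ae (hr.bdd_mul hg_meas hg_bdd)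
          (integrable_condExp.bdd_mul hg_meas hg_bdd) ?_
        filter_upwards [hrq] with ω hω using mul_le_mul_of_nonneg_left hω (hgC ω).1
    _ = ∫ ω, (μ[g * q | m]) ω ∂μ :=
        integral_congr_ae (condExp_mul_of_stronglyMeasurable_left hg.stronglyMeasurable
          (hq.bdd_mul hg_meas hg_bdd) hq).symm
    _ = ∫ ω, g ω * q ω ∂μ := integral_condExp hm

theorem integral_mul_one_sub_mul_mul_exp_le [IsFiniteMeasure μ] (hm : m ≤ m0)
    {W a q r : Ω → ℝ} {C : ℝ} (hW : Measurable[m] W) (hWC : ∀ ω, W ω ∈ Set.Icc 0 C)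
    (ha : Measurable[m] a) (ha01 : ∀ ω, a ω ∈ Set.Icc (0 : ℝ) 1)
    (hr : Measurable[m] r) (hr01 : ∀ ω, r ω ∈ Set.Icc (0 : ℝ) 1)
    (hq : Integrable q μ) (hrq : r ≤ᵐ[μ] μ[q | m]) :
    ∫ ω, W ω * ((1 - a ω * q ω) * Real.exp (a ω * r ω)) ∂μ ≤ ∫ ω, W ω ∂μ := by
  set h : Ω → ℝ := fun ω => W ω * Real.exp (a ω * r ω)
  have hh : Measurable[m] h := hW.mul (ha.mul hr).exp
  have hhC : ∀ ω, h ω ∈ Set.Icc 0 (C * Real.exp 1) := fun ω =>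
    ⟨mul_nonneg (hWC ω).1 (Real.exp_pos _).le,
      mul_le_mul (hWC ω).2 (Real.exp_le_exp.2 (mul_le_one₀ (ha01 ω).2 (hr01 ω).1 (hr01 ω).2))
        (Real.exp_pos _).le ((hWC ω).1.trans (hWC ω).2)⟩
  have hhaC : ∀ ω, h ω * a ω ∈ Set.Icc 0 (C * Real.exp 1) := fun ω =>
    ⟨mul_nonneg (hhC ω).1 (ha01 ω).1,
      (mul_le_of_le_one_right (hhC ω).1 (ha01 ω).2).trans (hhC ω).2⟩
  have hha_meas : AEStronglyMeasurable (fun ω => h ω * a ω) μ :=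
    ((hh.mul ha).mono hm le_rfl).aestronglyMeasurable
  have hha_bdd : ∀ᵐ ω ∂μ, ‖h ω * a ω‖ ≤ C * Real.exp 1 :=
    .of_forall fun ω => by rw [Real.norm_of_nonneg (hhaC ω).1]; exact (hhaC ω).2
  have hint_h : Integrable h μ := integrable_of_mem_Icc (hh.mono hm le_rfl) hhC
  have hint_r : Integrable r μ := integrable_of_mem_Icc (hr.mono hm le_rfl) hr01
  have hint_haq := hq.bdd_mul hha_meas hha_bdd
  have hint_har := hint_r.bdd_mul hha_meas hha_bdd
  have hcomp := integral_mul_le_integral_mul_of_le_condExp hm (g := fun ω => h ω * a ω)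
    (hh.mul ha) hhaC hq hint_r hrq
  calc ∫ ω, W ω * ((1 - a ω * q ω) * Real.exp (a ω * r ω)) ∂μ
        = ∫ ω, h ω ∂μ - ∫ ω, h ω * a ω * q ω ∂μ := by
          rw [← integral_sub hint_h hint_haq]; congr 1; ext ω; ring
    _ ≤ ∫ ω, h ω ∂μ - ∫ ω, h ω * a ω * r ω ∂μ := by linarith
    _ = ∫ ω, h ω - h ω * a ω * r ω ∂μ := (integral_sub hint_h hint_har).symm
    _ ≤ ∫ ω, W ω ∂μ := by
          refine integral_mono (hint_h.sub hint_har)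
            (integrable_of_mem_Icc (hW.mono hm le_rfl) hWC) fun ω => ?_
          calc h ω - h ω * a ω * r ω = W ω * ((1 - a ω * r ω) * Real.exp (a ω * r ω)) := by
                ring
            _ ≤ W ω * 1 := mul_le_mul_of_nonneg_left (one_sub_mul_exp_le_one _) (hWC ω).1
            _ = W ω := mul_one _

end Expectation

section CompensatedSurvival

variable {Ω : Type*} {m0 : MeasurableSpace Ω} {a q r : ℕ → Ω → ℝ}

/-- For `{0,1}`-valued `a` and `q`, the product of the `1 - a s * q s` is the indicator that no
success occurs while `a = 1`; the factor `exp (∑ a s * r s)` makes it a supermartingale. -/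
noncomputable def compensatedSurvival (a q r : ℕ → Ω → ℝ) (t : ℕ) (ω : Ω) : ℝ :=
  ∏ s ∈ Finset.Icc 1 t, (1 - a s ω * q s ω) * Real.exp (a s ω * r s ω)

@[simp]
theorem compensatedSurvival_zero (ω : Ω) : compensatedSurvival a q r 0 ω = 1 := by
  simp [compensatedSurvival]

theorem compensatedSurvival_succ (t : ℕ) (ω : Ω) :
    compensatedSurvival a q r (t + 1) ω =
      compensatedSurvival a q r t ω *
        ((1 - a (t + 1) ω * q (t + 1) ω) * Real.exp (a (t + 1) ω * r (t + 1) ω)) :=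
  Finset.prod_Icc_succ_top (Nat.le_add_left 1 t) _

theorem compensatedSurvival_eq_exp_sum {t : ℕ} {ω : Ω}
    (h : ∀ s ∈ Finset.Icc 1 t, a s ω * q s ω = 0) :
    compensatedSurvival a q r t ω = Real.exp (∑ s ∈ Finset.Icc 1 t, a s ω * r s ω) := by
  rw [Real.exp_sum]
  exact Finset.prod_congr rfl fun s hs => by rw [h s hs, sub_zero, one_mul]

theorem compensatedSurvival_mem_Icc (ha : ∀ t ω, a t ω ∈ Set.Icc (0 : ℝ) 1)
    (hq : ∀ t ω, q t ω ∈ Set.Icc (0 : ℝ) 1) (hr : ∀ t ω, r t ω ∈ Set.Icc (0 : ℝ) 1)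
    (t : ℕ) (ω : Ω) : compensatedSurvival a q r t ω ∈ Set.Icc 0 (Real.exp 1 ^ t) := by
  have hfactor (s : ℕ) :
      (1 - a s ω * q s ω) * Real.exp (a s ω * r s ω) ∈ Set.Icc 0 (Real.exp 1) := by
    obtain ⟨ha0, ha1⟩ := ha s ω
    obtain ⟨hq0, hq1⟩ := hq s ω
    obtain ⟨hr0, hr1⟩ := hr s ω
    refine ⟨mul_nonneg (by nlinarith) (Real.exp_pos _).le, ?_⟩
    calc (1 - a s ω * q s ω) * Real.exp (a s ω * r s ω) ≤ 1 * Real.exp 1 :=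
          mul_le_mul (by nlinarith) (Real.exp_le_exp.2 (mul_le_one₀ ha1 hr0 hr1))
            (Real.exp_pos _).le zero_le_one
      _ = Real.exp 1 := one_mul _
  refine ⟨Finset.prod_nonneg fun s _ => (hfactor s).1, ?_⟩
  calc compensatedSurvival a q r t ω ≤ ∏ _s ∈ Finset.Icc 1 t, Real.exp 1 :=
        Finset.prod_le_prod (fun s _ => (hfactor s).1) fun s _ => (hfactor s).2
    _ = Real.exp 1 ^ t := by simp

theorem measurable_compensatedSurvival {ℱ : Filtration ℕ m0}
    (ha : ∀ t, 1 ≤ t → Measurable[ℱ (t - 1)] (a t)) (hq : ∀ t, Measurable[ℱ t] (q t))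
    (hr : ∀ t, 1 ≤ t → Measurable[ℱ (t - 1)] (r t)) (t : ℕ) :
    Measurable[ℱ t] (compensatedSurvival a q r t) := by
  refine Finset.measurable_prod _ fun s hs => ?_
  obtain ⟨hs1, hst⟩ := Finset.mem_Icc.1 hs
  have hle : ℱ (s - 1) ≤ ℱ t := ℱ.mono (by omega)
  have has : Measurable[ℱ t] (a s) := (ha s hs1).mono hle le_rfl
  exact (measurable_const.sub (has.mul ((hq s).mono (ℱ.mono hst) le_rfl))).mul
    (has.mul ((hr s hs1).mono hle le_rfl)).exp

theorem integral_compensatedSurvival_le_one {μ : Measure Ω} [IsProbabilityMeasure μ]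
    {ℱ : Filtration ℕ m0} {T : ℕ}
    (ha01 : ∀ t ω, a t ω ∈ Set.Icc (0 : ℝ) 1) (hq01 : ∀ t ω, q t ω ∈ Set.Icc (0 : ℝ) 1)
    (hr01 : ∀ t ω, r t ω ∈ Set.Icc (0 : ℝ) 1)
    (ha : ∀ t, 1 ≤ t → Measurable[ℱ (t - 1)] (a t)) (hq : ∀ t, Measurable[ℱ t] (q t))
    (hr : ∀ t, 1 ≤ t → Measurable[ℱ (t - 1)] (r t))
    (hcond : ∀ t, 1 ≤ t → t ≤ T → r t ≤ᵐ[μ] μ[q t | ℱ (t - 1)]) :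
    ∫ ω, compensatedSurvival a q r T ω ∂μ ≤ 1 := by
  suffices ∀ t ≤ T, ∫ ω, compensatedSurvival a q r t ω ∂μ ≤ 1 from this T le_rfl
  intro t
  induction t with
  | zero => intro _; simp
  | succ t ih =>
    intro ht
    simp only [compensatedSurvival_succ]
    exact (integral_mul_one_sub_mul_mul_exp_le (ℱ.le t)
      (measurable_compensatedSurvival ha hq hr t) (compensatedSurvival_mem_Icc ha01 hq01 hr01 t)
      (ha (t + 1) le_add_self) (ha01 _) (hr (t + 1) le_add_self) (hr01 _)
      (integrable_of_mem_Icc ((hq (t + 1)).mono (ℱ.le _) le_rfl) (hq01 _))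
      (hcond (t + 1) le_add_self ht)).trans (ih (by omega))

end CompensatedSurvival

section Crossing

theorem monotone_sum_Icc {f : ℕ → ℝ} (hf : ∀ n, 0 ≤ f n) :
    Monotone fun t => ∑ s ∈ Finset.Icc 1 t, f s := fun _ _ hle =>
  Finset.sum_le_sum_of_subset_of_nonneg (Finset.Icc_subset_Icc_right hle) fun n _ _ => hf n

noncomputable def firstCrossing (f : ℕ → ℝ) (θ : ℝ) (T : ℕ) : ℕ∞ :=
  sInf {u : ℕ∞ | ∃ t : ℕ, u = t ∧ 1 ≤ t ∧ t ≤ T ∧ θ ≤ f t}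

variable {f : ℕ → ℝ} {θ : ℝ} {T : ℕ}

theorem coe_le_firstCrossing (hf : Monotone f) {s : ℕ} (hs : f (s - 1) < θ) :
    (s : ℕ∞) ≤ firstCrossing f θ T := by
  refine le_sInf ?_
  rintro _ ⟨t, rfl, -, -, hθt⟩
  by_contra hts
  have : t ≤ s - 1 := by norm_cast at hts; omega
  linarith [hf this]

theorem le_of_firstCrossing_ne_top (hf : Monotone f) (h : firstCrossing f θ T ≠ ⊤) :
    θ ≤ f T := by
  rcases Set.eq_empty_or_nonempty {u : ℕ∞ | ∃ t : ℕ, u = t ∧ 1 ≤ t ∧ t ≤ T ∧ θ ≤ f t} with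
    hempty | ⟨_, t, rfl, -, htT, hθt⟩
  · exact absurd (by rw [firstCrossing, hempty, sInf_empty]) h
  · exact hθt.trans (hf htT)

end Crossing

section NotYetCrossed

variable {Ω : Type*} {m0 : MeasurableSpace Ω} {q r : ℕ → Ω → ℝ} {θ : ℝ} {T : ℕ}

/-- The indicator of `s ≤ τ_θ`, read off as `R_{s-1} < θ`, which makes it predictable. -/
noncomputable def notYetCrossed (r : ℕ → Ω → ℝ) (θ : ℝ) (s : ℕ) (ω : Ω) : ℝ :=
  if ∑ u ∈ Finset.Icc 1 (s - 1), r u ω < θ then 1 else 0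

theorem notYetCrossed_mem_Icc (s : ℕ) (ω : Ω) : notYetCrossed r θ s ω ∈ Set.Icc (0 : ℝ) 1 := by
  unfold notYetCrossed; split_ifs <;> simp

theorem measurable_sum_Icc {ℱ : Filtration ℕ m0} (hr : ∀ t, 1 ≤ t → Measurable[ℱ (t - 1)] (r t))
    {t n : ℕ} (htn : t ≤ n + 1) : Measurable[ℱ n] fun ω => ∑ u ∈ Finset.Icc 1 t, r u ω :=
  Finset.measurable_sum _ fun u hu => (hr u (Finset.mem_Icc.1 hu).1).mono
    (ℱ.mono (by have := (Finset.mem_Icc.1 hu).2; omega)) le_rfl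

theorem measurable_notYetCrossed {ℱ : Filtration ℕ m0}
    (hr : ∀ t, 1 ≤ t → Measurable[ℱ (t - 1)] (r t)) (s : ℕ) :
    Measurable[ℱ (s - 1)] (notYetCrossed r θ s) :=
  Measurable.ite (measurableSet_lt (measurable_sum_Icc hr (by omega)) measurable_const)
    measurable_const measurable_const

theorem min_sum_le_sum_notYetCrossed_mul (t : ℕ) (ω : Ω) :
    min (∑ s ∈ Finset.Icc 1 t, r s ω) θ ≤
      ∑ s ∈ Finset.Icc 1 t, notYetCrossed r θ s ω * r s ω := by
  induction t with
  | zero => simp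
  | succ t ih =>
    rw [Finset.sum_Icc_succ_top le_add_self, Finset.sum_Icc_succ_top le_add_self, notYetCrossed,
      Nat.add_sub_cancel]
    split_ifs with hlt
    · rw [min_eq_left hlt.le] at ih
      linarith [min_le_left (∑ s ∈ Finset.Icc 1 t, r s ω + r (t + 1) ω) θ]
    · rw [min_eq_right (not_lt.1 hlt)] at ih
      linarith [min_le_right (∑ s ∈ Finset.Icc 1 t, r s ω + r (t + 1) ω) θ]

theorem crossing_bound_le_indicator_success (hq01 : ∀ t ω, q t ω = 0 ∨ q t ω = 1)
    (hr01 : ∀ t ω, r t ω ∈ Set.Icc (0 : ℝ) 1) (hθ : 0 ≤ θ) (ω : Ω) :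
    (1 - Real.exp (-θ)) * {x | θ ≤ ∑ s ∈ Finset.Icc 1 T, r s x}.indicator 1 ω +
        Real.exp (-θ) * (1 - compensatedSurvival (notYetCrossed r θ) q r T ω) ≤
      {x | ∃ s, 1 ≤ s ∧ s ≤ T ∧ ∑ u ∈ Finset.Icc 1 (s - 1), r u x < θ ∧ q s x = 1}.indicator
        1 ω := by
  set success := {x | ∃ s, 1 ≤ s ∧ s ≤ T ∧ ∑ u ∈ Finset.Icc 1 (s - 1), r u x < θ ∧ q s x = 1}
  set crossed := {x | θ ≤ ∑ s ∈ Finset.Icc 1 T, r s x}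
  by_cases hsucc : ω ∈ success
  · have hW := (compensatedSurvival_mem_Icc (a := notYetCrossed r θ) notYetCrossed_mem_Icc
      (fun t ω => mem_Icc_zero_one_of_eq_zero_or_eq_one (hq01 t ω)) hr01 T ω).1
    have hcross : crossed.indicator (1 : Ω → ℝ) ω ≤ 1 :=
      Set.indicator_le_self' (fun _ _ => zero_le_one) ω
    have hc : 0 ≤ 1 - Real.exp (-θ) := sub_nonneg.2 (Real.exp_le_one_iff.2 (by linarith))
    rw [Set.indicator_of_mem hsucc, Pi.one_apply]
    nlinarith [Real.exp_pos (-θ)]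
  · have hstopped : ∀ s ∈ Finset.Icc 1 T, notYetCrossed r θ s ω * q s ω = 0 := by
      intro s hs
      obtain ⟨hs1, hsT⟩ := Finset.mem_Icc.1 hs
      unfold notYetCrossed
      split_ifs with hlt
      · rcases hq01 s ω with h | h
        · rw [h, mul_zero]
        · exact absurd ⟨s, hs1, hsT, hlt, h⟩ hsucc
      · exact zero_mul _
    rw [compensatedSurvival_eq_exp_sum hstopped, Set.indicator_of_notMem hsucc]
    have hS := min_sum_le_sum_notYetCrossed_mul (r := r) (θ := θ) T ω
    set S := ∑ s ∈ Finset.Icc 1 T, notYetCrossed r θ s ω * r s ω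
    by_cases hcross : ω ∈ crossed
    · rw [Set.indicator_of_mem hcross, Pi.one_apply]
      rw [min_eq_right hcross] at hS
      have : 1 ≤ Real.exp (-θ) * Real.exp S := by
        rw [← Real.exp_add]; exact Real.one_le_exp (by linarith)
      linarith
    · rw [Set.indicator_of_notMem hcross]
      have hS0 : 0 ≤ S := (le_min (Finset.sum_nonneg fun s _ => (hr01 s ω).1) hθ).trans hS
      nlinarith [Real.one_le_exp hS0, Real.exp_pos (-θ)]

theorem one_sub_exp_neg_mul_measureReal_crossed_le {μ : Measure Ω} [IsProbabilityMeasure μ]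
    {ℱ : Filtration ℕ m0} (hq01 : ∀ t ω, q t ω = 0 ∨ q t ω = 1)
    (hr01 : ∀ t ω, r t ω ∈ Set.Icc (0 : ℝ) 1)
    (hq : ∀ t, Measurable[ℱ t] (q t)) (hr : ∀ t, 1 ≤ t → Measurable[ℱ (t - 1)] (r t))
    (hcond : ∀ t, 1 ≤ t → t ≤ T → r t ≤ᵐ[μ] μ[q t | ℱ (t - 1)]) (hθ : 0 ≤ θ) :
    (1 - Real.exp (-θ)) * μ.real {ω | θ ≤ ∑ s ∈ Finset.Icc 1 T, r s ω} ≤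
      μ.real {ω | ∃ s, 1 ≤ s ∧ s ≤ T ∧ ∑ u ∈ Finset.Icc 1 (s - 1), r u ω < θ ∧ q s ω = 1} := by
  set success := {ω | ∃ s, 1 ≤ s ∧ s ≤ T ∧ ∑ u ∈ Finset.Icc 1 (s - 1), r u ω < θ ∧ q s ω = 1}
  set crossed := {ω | θ ≤ ∑ s ∈ Finset.Icc 1 T, r s ω}
  set W := compensatedSurvival (notYetCrossed r θ) q r T
  have hq01' (t : ℕ) (ω : Ω) := mem_Icc_zero_one_of_eq_zero_or_eq_one (hq01 t ω)
  have hR_meas (t : ℕ) : Measurable fun ω => ∑ u ∈ Finset.Icc 1 t, r u ω :=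
    (measurable_sum_Icc hr (n := t) (by omega)).mono (ℱ.le t) le_rfl
  have hcrossed : MeasurableSet crossed := measurableSet_le measurable_const (hR_meas T)
  have hsuccess : MeasurableSet success := by
    have hq_meas (s : ℕ) : Measurable (q s) := (hq s).mono (ℱ.le s) le_rfl
    measurability
  have hW : ∫ ω, W ω ∂μ ≤ 1 := integral_compensatedSurvival_le_one notYetCrossed_mem_Icc hq01'
    hr01 (fun t _ => measurable_notYetCrossed hr t) hq hr hcond
  have hW_int : Integrable W μ := integrable_of_mem_Icc ((measurable_compensatedSurvival
    (fun t _ => measurable_notYetCrossed hr t) hq hr T).mono (ℱ.le T) le_rfl)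
    (compensatedSurvival_mem_Icc notYetCrossed_mem_Icc hq01' hr01 T)
  have hW_int' : Integrable (fun ω => 1 - W ω) μ := (integrable_const 1).sub hW_int
  have hcrossed_int : Integrable (crossed.indicator 1) μ :=
    (integrable_const (1 : ℝ)).indicator hcrossed
  calc (1 - Real.exp (-θ)) * μ.real crossed
      ≤ (1 - Real.exp (-θ)) * μ.real crossed + Real.exp (-θ) * (1 - ∫ ω, W ω ∂μ) :=
        le_add_of_nonneg_right (mul_nonneg (Real.exp_pos _).le (sub_nonneg.2 hW))
    _ = ∫ ω, (1 - Real.exp (-θ)) * crossed.indicator 1 ω + Real.exp (-θ) * (1 - W ω) ∂μ := by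
        rw [integral_add (hcrossed_int.const_mul _) (hW_int'.const_mul _), integral_const_mul,
          integral_const_mul, integral_sub (integrable_const 1) hW_int, integral_const,
          integral_indicator_one hcrossed, probReal_univ, one_smul]
    _ ≤ ∫ ω, success.indicator 1 ω ∂μ :=
        integral_mono ((hcrossed_int.const_mul _).add (hW_int'.const_mul _))
          ((integrable_const (1 : ℝ)).indicator hsuccess)
          (crossing_bound_le_indicator_success hq01 hr01 hθ)
    _ = μ.real success := integral_indicator_one hsuccess

end NotYetCrossed

/-- Auxiliary lemma: if `q_t ∈ {0,1}` has conditional success probability at least the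
`F_{t-1}`-measurable `r_t ∈ [0,1]`, and `τ_θ` is the first time `R_t = ∑_{s≤t} r_s`
reaches `θ`, then `P(∑_{t=1}^{τ_θ} q_t ≥ 1) ≥ (1 - e^{-θ})·P(τ_θ < ∞)`. -/
theorem auxiliary_stopping_lower_bound
    {Ω : Type*} {m0 : MeasurableSpace Ω} (μ : Measure Ω) [IsProbabilityMeasure μ]
    (ℱ : Filtration ℕ m0) (T : ℕ)
    (q r : ℕ → Ω → ℝ)
    (hq01 : ∀ t ω, q t ω = 0 ∨ q t ω = 1)
    (hr01 : ∀ t ω, r t ω ∈ Set.Icc (0:ℝ) 1)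
    (hqadapt : ∀ t, Measurable[ℱ t] (q t))
    (hradapt : ∀ t, 1 ≤ t → Measurable[ℱ (t - 1)] (r t))
    (hcond : ∀ t, 1 ≤ t → t ≤ T → ∀ᵐ ω ∂μ, r t ω ≤ (μ[q t | ℱ (t - 1)]) ω)
    (θ : ℝ) (hθ : 0 < θ)
    (R : ℕ → Ω → ℝ) (hR : ∀ t ω, R t ω = ∑ s ∈ Finset.Icc 1 t, r s ω)
    (τ : Ω → ℕ∞)
    (hτ : ∀ ω, τ ω = sInf {u : ℕ∞ | ∃ t : ℕ, u = (t : ℕ∞) ∧ 1 ≤ t ∧ t ≤ T ∧ θ ≤ R t ω}) :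
    (μ {ω | ∃ t : ℕ, 1 ≤ t ∧ t ≤ T ∧ (t : ℕ∞) ≤ τ ω ∧ q t ω = 1}).toReal ≥
      (1 - Real.exp (-θ)) * (μ {ω | τ ω ≠ ⊤}).toReal := by
  obtain rfl : R = fun t ω => ∑ s ∈ Finset.Icc 1 t, r s ω := funext₂ hR
  have hmono (ω : Ω) : Monotone fun t => ∑ s ∈ Finset.Icc 1 t, r s ω :=
    monotone_sum_Icc fun s => (hr01 s ω).1
  have hcrossed : {ω | τ ω ≠ ⊤} ⊆ {ω | θ ≤ ∑ s ∈ Finset.Icc 1 T, r s ω} := fun ω hω =>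
    le_of_firstCrossing_ne_top (hmono ω) ((hτ ω).symm.trans_ne hω)
  have hsuccess :
      {ω | ∃ s, 1 ≤ s ∧ s ≤ T ∧ ∑ u ∈ Finset.Icc 1 (s - 1), r u ω < θ ∧ q s ω = 1} ⊆
        {ω | ∃ t : ℕ, 1 ≤ t ∧ t ≤ T ∧ (t : ℕ∞) ≤ τ ω ∧ q t ω = 1} :=
    fun ω ⟨s, hs1, hsT, hlt, hqs⟩ =>
      ⟨s, hs1, hsT, (hτ ω).symm ▸ coe_le_firstCrossing (hmono ω) hlt, hqs⟩
  calc (1 - Real.exp (-θ)) * (μ {ω | τ ω ≠ ⊤}).toReal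
      ≤ (1 - Real.exp (-θ)) * μ.real {ω | θ ≤ ∑ s ∈ Finset.Icc 1 T, r s ω} :=
        mul_le_mul_of_nonneg_left (measureReal_mono hcrossed)
          (sub_nonneg.2 (Real.exp_le_one_iff.2 (by linarith)))
    _ ≤ _ := one_sub_exp_neg_mul_measureReal_crossed_le hq01 hr01 hqadapt hradapt hcond hθ.le
    _ ≤ _ := measureReal_mono hsuccess
end

section
/- Let q_t ∈ {0,1} and r_t ∈ [0,1] be adapted processes with r_t being F_{t-1}-measurable and P(q_t = 1 | F_{t-1}) ≥ r_t. Let τ be the first time t such that either R_t = ∑_{s≤t} r_s ≥ 1 or q_t = 1 (or ∞ if neither occurs by time T, in which case τ is truncated at T). Then P(∑_{t=1}^{τ} q_t ≥ 1) ≥ E[1 - e^{-R_τ}]. -/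
/-!
Telescoping `1 - e^{-R_τ} = ∑_{t<τ} (e^{-R_t} - e^{-R_{t+1}})` and using
`e^{-a} - e^{-(a+b)} ≤ b` for `a, b ≥ 0` bounds `E[1 - e^{-R_τ}]` by `∑_t E[1_{t<τ} r_{t+1}]`.
As `τ` is the hitting time of the adapted process `(R, q)`, the event `{t < τ}` is
`ℱ_t`-measurable, so `r_{t+1} ≤ E[q_{t+1} | ℱ_t]` turns this into the bound `E[∑_{t<τ} q_{t+1}]`.
Finally `q` vanishes strictly before `τ`, so `∑_{t<τ} q_{t+1} = q_τ` is at most the indicator of a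
success by time `τ`.
-/

open MeasureTheory Finset

lemma Real.exp_neg_sub_exp_neg_add_le {a b : ℝ} (ha : 0 ≤ a) (hb : 0 ≤ b) :
    Real.exp (-a) - Real.exp (-(a + b)) ≤ b := by
  have hfactor : Real.exp (-a) - Real.exp (-(a + b)) = Real.exp (-a) * (1 - Real.exp (-b)) := by
    rw [neg_add, Real.exp_add]; ring
  have hexp_a : Real.exp (-a) ≤ 1 := Real.exp_le_one_iff.mpr (by linarith)
  have hexp_b : Real.exp (-b) ≤ 1 := Real.exp_le_one_iff.mpr (by linarith)
  rw [hfactor]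
  calc Real.exp (-a) * (1 - Real.exp (-b)) ≤ 1 * (1 - Real.exp (-b)) := by gcongr
    _ ≤ b := by linarith [Real.add_one_le_exp (-b)]

open scoped Classical in
lemma sum_range_add_one_le_ite_exists {x : ℕ → ℝ} {n : ℕ} (hx01 : ∀ s, x s = 0 ∨ x s = 1)
    (hx : ∀ s, 1 ≤ s → s < n → x s = 0) :
    ∑ t ∈ range n, x (t + 1) ≤ if ∃ s, 1 ≤ s ∧ s ≤ n ∧ x s = 1 then 1 else 0 := by
  cases n with
  | zero => simp
  | succ k =>
    have hinit : ∑ t ∈ range k, x (t + 1) = 0 :=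
      sum_eq_zero fun t ht => hx (t + 1) (by omega) (by simp at ht; omega)
    rw [sum_range_succ, hinit, zero_add]
    rcases hx01 (k + 1) with hk | hk
    · rw [hk]; split_ifs <;> norm_num
    · rw [if_pos ⟨k + 1, le_add_self, le_rfl, hk⟩, hk]

section Integrals

variable {Ω : Type*} {m0 : MeasurableSpace Ω} {μ : Measure Ω}

lemma integral_sum_range_eq_sum_setIntegral {τ : Ω → ℕ} {T : ℕ} (hτT : ∀ ω, τ ω ≤ T)
    (hτ : ∀ t, MeasurableSet {ω | t < τ ω}) {f : ℕ → Ω → ℝ} (hf : ∀ t, Integrable (f t) μ) :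
    ∫ ω, ∑ t ∈ range (τ ω), f t ω ∂μ = ∑ t ∈ range T, ∫ ω in {ω | t < τ ω}, f t ω ∂μ := by
  have hsum : ∀ ω, ∑ t ∈ range (τ ω), f t ω
      = ∑ t ∈ range T, Set.indicator {ω | t < τ ω} (f t) ω := by
    intro ω
    rw [← sum_range_add_sum_Ico _ (hτT ω), sum_eq_zero (s := Ico _ _)]
    · rw [add_zero]
      exact sum_congr rfl fun t ht => (Set.indicator_of_mem (by simpa using ht) _).symm
    · exact fun t ht => Set.indicator_of_notMem (by simp at ht ⊢; omega) _
  simp_rw [hsum]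
  rw [integral_finsetSum _ fun t _ => (hf t).indicator (hτ t)]
  exact sum_congr rfl fun t _ => integral_indicator (hτ t)

lemma integral_le_measureReal_of_le_indicator [IsFiniteMeasure μ] {f : Ω → ℝ} {s : Set Ω}
    (hf : ∀ ω, f ω ≤ s.indicator 1 ω) : ∫ ω, f ω ∂μ ≤ μ.real s := by
  by_cases hint : Integrable f μ
  · calc ∫ ω, f ω ∂μ ≤ ∫ ω, (toMeasurable μ s).indicator 1 ω ∂μ := by
          refine integral_mono hint
            ((integrable_const 1).indicator (measurableSet_toMeasurable μ s))
            fun ω => (hf ω).trans ?_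
          exact Set.indicator_le_indicator_of_subset (subset_toMeasurable μ s)
            (fun _ => zero_le_one) ω
      _ = μ.real s := by
          rw [integral_indicator_one (measurableSet_toMeasurable μ s), measureReal_def,
            measureReal_def, measure_toMeasurable]
  · rw [integral_undef hint]
    exact measureReal_nonneg

variable [IsFiniteMeasure μ] {m : MeasurableSpace Ω}

lemma setIntegral_le_setIntegral_of_le_condExp (hm : m ≤ m0) {s : Set Ω}
    (hs : MeasurableSet[m] s) {f g : Ω → ℝ} (hf : Integrable f μ) (hg : Integrable g μ)
    (hfg : f ≤ᵐ[μ] μ[g | m]) : ∫ ω in s, f ω ∂μ ≤ ∫ ω in s, g ω ∂μ :=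
  (setIntegral_mono_ae hf.integrableOn integrable_condExp.integrableOn hfg).trans_eq
    (setIntegral_condExp hm hg hs)

lemma setIntegral_exp_neg_sub_exp_neg_add_le (hm : m ≤ m0) {s : Set Ω}
    (hs : MeasurableSet[m] s) {a b g : Ω → ℝ} (ha : ∀ ω, 0 ≤ a ω) (hb0 : ∀ ω, 0 ≤ b ω)
    (hb : Integrable b μ) (hg : Integrable g μ) (hbg : b ≤ᵐ[μ] μ[g | m]) :
    ∫ ω in s, (Real.exp (-a ω) - Real.exp (-(a ω + b ω))) ∂μ ≤ ∫ ω in s, g ω ∂μ := by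
  have hdiff_nonneg : ∀ ω, 0 ≤ Real.exp (-a ω) - Real.exp (-(a ω + b ω)) := fun ω =>
    sub_nonneg.2 (Real.exp_le_exp.2 (by linarith [hb0 ω]))
  calc ∫ ω in s, (Real.exp (-a ω) - Real.exp (-(a ω + b ω))) ∂μ ≤ ∫ ω in s, b ω ∂μ :=
        integral_mono_of_nonneg (.of_forall hdiff_nonneg) hb.integrableOn
          (.of_forall fun ω => Real.exp_neg_sub_exp_neg_add_le (ha ω) (hb0 ω))
    _ ≤ ∫ ω in s, g ω ∂μ := setIntegral_le_setIntegral_of_le_condExp hm hs hb hg hbg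

end Integrals

lemma MeasureTheory.hittingBtwn_eq_sInf_union_singleton {Ω β : Type*} (u : ℕ → Ω → β)
    (s : Set β) (n m : ℕ) (ω : Ω) :
    hittingBtwn u s n m ω = sInf ({t | n ≤ t ∧ t ≤ m ∧ u t ω ∈ s} ∪ {m}) := by
  apply le_antisymm
  · obtain ⟨⟨hnt, htm, hts⟩⟩ | htm := Nat.sInf_mem (s := {t | n ≤ t ∧ t ≤ m ∧ u t ω ∈ s} ∪ {m})
      ⟨m, Or.inr rfl⟩
    · exact hittingBtwn_le_of_mem hnt htm hts
    · rw [htm]; exact hittingBtwn_le ω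
  · apply Nat.sInf_le
    by_cases hhit : ∃ j ∈ Set.Icc n m, u j ω ∈ s
    · exact Or.inl ⟨le_hittingBtwn_of_exists hhit, hittingBtwn_le ω, hittingBtwn_mem_set hhit⟩
    · right
      rw [hittingBtwn, if_neg hhit, Set.mem_singleton_iff]

lemma adapted_of_eq_sum_Icc_one {Ω : Type*} {m0 : MeasurableSpace Ω} (ℱ : Filtration ℕ m0)
    {r R : ℕ → Ω → ℝ} (hr : ∀ t, 1 ≤ t → Measurable[ℱ (t - 1)] (r t))
    (hR : ∀ t ω, R t ω = ∑ s ∈ Icc 1 t, r s ω) : Adapted ℱ R := fun t => by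
  rw [show R t = fun ω => ∑ s ∈ Icc 1 t, r s ω from funext (hR t)]
  exact Finset.measurable_sum _ fun s hs =>
    (hr s (mem_Icc.1 hs).1).mono (ℱ.mono (by have := (mem_Icc.1 hs).2; omega)) le_rfl

theorem integral_one_sub_exp_neg_le_measureReal_exists_eq_one
    {Ω : Type*} {m0 : MeasurableSpace Ω} (μ : Measure Ω) [IsFiniteMeasure μ]
    (ℱ : Filtration ℕ m0) (T : ℕ) (q r : ℕ → Ω → ℝ)
    (hq01 : ∀ t ω, q t ω = 0 ∨ q t ω = 1) (hr01 : ∀ t ω, r t ω ∈ Set.Icc (0:ℝ) 1)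
    (hqadapt : ∀ t, Measurable[ℱ t] (q t)) (hradapt : ∀ t, 1 ≤ t → Measurable[ℱ (t - 1)] (r t))
    (hcond : ∀ t, 1 ≤ t → t ≤ T → ∀ᵐ ω ∂μ, r t ω ≤ (μ[q t | ℱ (t - 1)]) ω)
    (R : ℕ → Ω → ℝ) (hR : ∀ t ω, R t ω = ∑ s ∈ Icc 1 t, r s ω)
    (τ : Ω → ℕ) (hτT : ∀ ω, τ ω ≤ T) (hτ : ∀ t, MeasurableSet[ℱ t] {ω | t < τ ω})
    (hτq : ∀ ω s, 1 ≤ s → s < τ ω → q s ω = 0) :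
    ∫ ω, (1 - Real.exp (-(R (τ ω) ω))) ∂μ ≤ μ.real {ω | ∃ t, 1 ≤ t ∧ t ≤ τ ω ∧ q t ω = 1} := by
  have hR_meas : ∀ t, Measurable (R t) := fun t =>
    (adapted_of_eq_sum_Icc_one ℱ hradapt hR t).mono (ℱ.le t) le_rfl
  have hR_nonneg : ∀ t ω, 0 ≤ R t ω := fun t ω => by
    rw [hR]; exact sum_nonneg fun s _ => (hr01 s ω).1
  have hR_succ : ∀ t ω, R (t + 1) ω = R t ω + r (t + 1) ω := fun t ω => by
    rw [hR, hR, sum_Icc_succ_top (by omega)]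
  have hq_int : ∀ t, Integrable (q t) μ := fun t =>
    .of_bound ((hqadapt t).mono (ℱ.le t) le_rfl).aestronglyMeasurable 1 (.of_forall fun ω => by
      rcases hq01 t ω with h | h <;> simp [h])
  have hr_int : ∀ t, Integrable (r (t + 1)) μ := fun t =>
    .of_bound ((hradapt _ le_add_self).mono (ℱ.le _) le_rfl).aestronglyMeasurable 1
      (.of_forall fun ω => by rw [Real.norm_of_nonneg (hr01 _ ω).1]; exact (hr01 _ ω).2)
  have hexp_int : ∀ t, Integrable (fun ω => Real.exp (-R t ω) - Real.exp (-R (t + 1) ω)) μ :=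
    fun t => .of_bound (by fun_prop) 1 (.of_forall fun ω =>
      abs_sub_le_of_nonneg_of_le (Real.exp_pos _).le (Real.exp_le_one_iff.2 (by simp [hR_nonneg]))
        (Real.exp_pos _).le (Real.exp_le_one_iff.2 (by simp [hR_nonneg])))
  have hstep : ∀ t < T, ∫ ω in {ω | t < τ ω}, (Real.exp (-R t ω) - Real.exp (-R (t + 1) ω)) ∂μ
      ≤ ∫ ω in {ω | t < τ ω}, q (t + 1) ω ∂μ := fun t ht => by
    simp_rw [hR_succ]
    exact setIntegral_exp_neg_sub_exp_neg_add_le (ℱ.le t) (hτ t) (hR_nonneg t)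
      (fun ω => (hr01 _ ω).1) (hr_int t) (hq_int _)
      (by have h := hcond (t + 1) le_add_self ht; rwa [Nat.add_sub_cancel] at h)
  have hτ_meas : ∀ t, MeasurableSet {ω | t < τ ω} := fun t => ℱ.le t _ (hτ t)
  calc ∫ ω, (1 - Real.exp (-(R (τ ω) ω))) ∂μ
      = ∫ ω, ∑ t ∈ range (τ ω), (Real.exp (-R t ω) - Real.exp (-R (t + 1) ω)) ∂μ := by
        congr 1 with ω
        rw [sum_range_sub' (fun t => Real.exp (-R t ω)), hR 0 ω]
        simp
    _ = ∑ t ∈ range T, ∫ ω in {ω | t < τ ω}, (Real.exp (-R t ω) - Real.exp (-R (t + 1) ω)) ∂μ :=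
        integral_sum_range_eq_sum_setIntegral hτT hτ_meas hexp_int
    _ ≤ ∑ t ∈ range T, ∫ ω in {ω | t < τ ω}, q (t + 1) ω ∂μ :=
        sum_le_sum fun t ht => hstep t (mem_range.1 ht)
    _ = ∫ ω, ∑ t ∈ range (τ ω), q (t + 1) ω ∂μ :=
        (integral_sum_range_eq_sum_setIntegral hτT hτ_meas fun t => hq_int (t + 1)).symm
    _ ≤ μ.real {ω | ∃ t, 1 ≤ t ∧ t ≤ τ ω ∧ q t ω = 1} :=
        integral_le_measureReal_of_le_indicator fun ω =>
          (sum_range_add_one_le_ite_exists (hq01 · ω) (hτq ω)).trans_eq (by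
            classical rw [Set.indicator_apply]; rfl)

/-- Strong auxiliary lemma: if `q_t ∈ {0,1}` has conditional success probability at least
the `F_{t-1}`-measurable `r_t ∈ [0,1]`, and `τ` is the first time `t` with
`R_t = ∑_{s≤t} r_s ≥ 1` or `q_t = 1` (truncated at `T`), then
`P(∑_{t=1}^{τ} q_t ≥ 1) ≥ E[1 - e^{-R_τ}]`. -/
theorem strong_auxiliary_stopping_lower_bound
    {Ω : Type*} {m0 : MeasurableSpace Ω} (μ : Measure Ω) [IsProbabilityMeasure μ]
    (ℱ : Filtration ℕ m0) (T : ℕ)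
    (q r : ℕ → Ω → ℝ)
    (hq01 : ∀ t ω, q t ω = 0 ∨ q t ω = 1)
    (hr01 : ∀ t ω, r t ω ∈ Set.Icc (0:ℝ) 1)
    (hqadapt : ∀ t, Measurable[ℱ t] (q t))
    (hradapt : ∀ t, 1 ≤ t → Measurable[ℱ (t - 1)] (r t))
    (hcond : ∀ t, 1 ≤ t → t ≤ T → ∀ᵐ ω ∂μ, r t ω ≤ (μ[q t | ℱ (t - 1)]) ω)
    (R : ℕ → Ω → ℝ) (hR : ∀ t ω, R t ω = ∑ s ∈ Finset.Icc 1 t, r s ω)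
    (τ : Ω → ℕ)
    (hτ : ∀ ω, τ ω = sInf ({t : ℕ | 1 ≤ t ∧ t ≤ T ∧ (1 ≤ R t ω ∨ q t ω = 1)} ∪ {T})) :
    (μ {ω | ∃ t : ℕ, 1 ≤ t ∧ t ≤ τ ω ∧ q t ω = 1}).toReal ≥
      ∫ ω, (1 - Real.exp (-(R (τ ω) ω))) ∂μ := by
  let u : ℕ → Ω → ℝ × ℝ := fun t ω => (R t ω, q t ω)
  let S : Set (ℝ × ℝ) := {p | 1 ≤ p.1 ∨ p.2 = 1}
  have hτ_hit : ∀ ω, τ ω = hittingBtwn u S 1 T ω := fun ω =>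
    (hτ ω).trans (hittingBtwn_eq_sInf_union_singleton u S 1 T ω).symm
  have hu : Adapted ℱ u := fun t => (adapted_of_eq_sum_Icc_one ℱ hradapt hR t).prodMk (hqadapt t)
  have hS : MeasurableSet S :=
    (measurableSet_le measurable_const measurable_fst).union
      (measurableSet_eq_fun measurable_snd measurable_const)
  have hτ_gt : ∀ t, MeasurableSet[ℱ t] {ω | t < τ ω} := fun t => by
    simpa [← hτ_hit] using (hu.isStoppingTime_hittingBtwn hS (n := 1) (n' := T)).measurableSet_gt t
  exact integral_one_sub_exp_neg_le_measureReal_exists_eq_one μ ℱ T q r hq01 hr01 hqadapt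
    hradapt hcond R hR τ (fun ω => hτ_hit ω ▸ hittingBtwn_le ω) hτ_gt
    (fun ω s hs hsτ => (hq01 s ω).resolve_right fun hqs =>
      notMem_of_lt_hittingBtwn (u := u) (s := S) (hτ_hit ω ▸ hsτ) hs (Or.inr hqs))
end

section
/- Fix x ∈ {0,1}^T, p ∈ [0,1]^T, and let N = #{t : |x_t - p_t| ≥ 1/2}. Let y_1,...,y_T be i.i.d. uniform on {0,1}. Then E_y[|∑_{t=1}^T y_t (x_t - p_t)|] ≥ c·√N for a universal constant c > 0. -/
/-!
Put `a t = x t - p t` and `ε t = 2 y t - 1`. Flipping every bit, `y ↦ ¬y`, writes the Rademacher sum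
`∑ ε t * a t` as `S y - S (¬y)` with `S y = ∑ y t * a t`, so the average of `|S|` is at least half the
average of `|∑ ε t * a t|`: the constant shift `½ ∑ a t` costs at most a factor two.
For `X = ∑ ε t * a t` and `σ² = ∑ a t ^ 2` one has `E X² = σ²` and `E X⁴ ≤ 3 σ⁴`, and Hölder's
inequality `(E X²)³ ≤ (E |X|)² E X⁴` gives Khintchine's bound `σ² ≤ 3 (E |X|)²`.
Every `t` with `1/2 ≤ |a t|` contributes at least `1/4` to `σ²`, so `N ≤ 4 σ² ≤ 48 (E |S|)²` and
`c = 1/7` works.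
-/

open Finset

def boolSign (b : Bool) : ℝ := if b then 1 else -1

def rademacherSum {n : ℕ} (a : Fin n → ℝ) (y : Fin n → Bool) : ℝ :=
  ∑ t, boolSign (y t) * a t

theorem Fintype.sum_fun_fin_succ_eq_sum_cons {M α : Type*} [AddCommMonoid M] [Fintype α]
    {n : ℕ} (F : (Fin (n + 1) → α) → M) :
    ∑ y, F y = ∑ b, ∑ y : Fin n → α, F (Fin.cons b y) :=
  (Fintype.sum_equiv (Fin.consEquiv fun _ => α) _ F fun _ => rfl).symm.trans
    (Fintype.sum_prod_type _)

theorem rademacherSum_cons {n : ℕ} (a : Fin (n + 1) → ℝ) (b : Bool) (y : Fin n → Bool) :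
    rademacherSum a (Fin.cons b y) = boolSign b * a 0 + rademacherSum (Fin.tail a) y := by
  simp [rademacherSum, Fin.sum_univ_succ, Fin.tail]

theorem sum_rademacherSum_sq {n : ℕ} (a : Fin n → ℝ) :
    ∑ y, rademacherSum a y ^ 2 = 2 ^ n * ∑ t, a t ^ 2 := by
  induction n with
  | zero => simp [rademacherSum]
  | succ n ih =>
    have pair (y : Fin n → Bool) : ∑ b, rademacherSum a (Fin.cons b y) ^ 2 =
        2 * rademacherSum (Fin.tail a) y ^ 2 + 2 * a 0 ^ 2 := by
      simp only [Fintype.sum_bool, rademacherSum_cons, boolSign, if_true, Bool.false_eq_true,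
        if_false]
      ring
    have hsplit : ∑ t, a t ^ 2 = a 0 ^ 2 + ∑ t, Fin.tail a t ^ 2 := Fin.sum_univ_succ _
    rw [Fintype.sum_fun_fin_succ_eq_sum_cons, Finset.sum_comm, sum_congr rfl fun y _ => pair y,
      sum_add_distrib, ← mul_sum, ih, hsplit, sum_const, card_univ,
      Fintype.card_fun, Fintype.card_bool, Fintype.card_fin, nsmul_eq_mul]
    push_cast
    ring

theorem sum_rademacherSum_pow_four_le {n : ℕ} (a : Fin n → ℝ) :
    ∑ y, rademacherSum a y ^ 4 ≤ 3 * 2 ^ n * (∑ t, a t ^ 2) ^ 2 := by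
  induction n with
  | zero => simp [rademacherSum]
  | succ n ih =>
    have pair (y : Fin n → Bool) : ∑ b, rademacherSum a (Fin.cons b y) ^ 4 =
        2 * rademacherSum (Fin.tail a) y ^ 4 + 12 * a 0 ^ 2 * rademacherSum (Fin.tail a) y ^ 2
          + 2 * a 0 ^ 4 := by
      simp only [Fintype.sum_bool, rademacherSum_cons, boolSign, if_true, Bool.false_eq_true,
        if_false]
      ring
    have hsplit : ∑ t, a t ^ 2 = a 0 ^ 2 + ∑ t, Fin.tail a t ^ 2 := Fin.sum_univ_succ _
    have hσ : 0 ≤ ∑ t, Fin.tail a t ^ 2 := by positivity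
    rw [Fintype.sum_fun_fin_succ_eq_sum_cons, Finset.sum_comm, sum_congr rfl fun y _ => pair y,
      sum_add_distrib, sum_add_distrib, ← mul_sum, ← mul_sum, sum_rademacherSum_sq, hsplit,
      sum_const, card_univ, Fintype.card_fun, Fintype.card_bool, Fintype.card_fin, nsmul_eq_mul]
    push_cast
    rw [pow_succ (2 : ℝ) n]
    nlinarith [ih (Fin.tail a),
      mul_nonneg (pow_nonneg zero_le_two n) (pow_nonneg (sq_nonneg (a 0)) 2),
      mul_nonneg (pow_nonneg zero_le_two n) (mul_nonneg (sq_nonneg (a 0)) hσ)]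

theorem sum_sq_pow_three_le {ι R : Type*} [Field R] [LinearOrder R] [IsStrictOrderedRing R]
    (s : Finset ι) {f : ι → R} (hf : ∀ i ∈ s, 0 ≤ f i) :
    (∑ i ∈ s, f i ^ 2) ^ 3 ≤ (∑ i ∈ s, f i) ^ 2 * ∑ i ∈ s, f i ^ 4 := by
  have h₁ : (∑ i ∈ s, f i ^ 2) ^ 2 ≤ (∑ i ∈ s, f i) * ∑ i ∈ s, f i ^ 3 :=
    sum_sq_le_sum_mul_sum_of_sq_le_mul s hf (fun i hi => pow_nonneg (hf i hi) 3)
      fun i _ => le_of_eq (by ring)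
  have h₂ : (∑ i ∈ s, f i ^ 3) ^ 2 ≤ (∑ i ∈ s, f i ^ 2) * ∑ i ∈ s, f i ^ 4 :=
    sum_sq_le_sum_mul_sum_of_sq_le_mul s (fun i _ => sq_nonneg _)
      (fun i hi => pow_nonneg (hf i hi) 4) fun i _ => le_of_eq (by ring)
  have hsq : 0 ≤ ∑ i ∈ s, f i ^ 2 := sum_nonneg fun i _ => sq_nonneg _
  have h : (∑ i ∈ s, f i ^ 2) * (∑ i ∈ s, f i ^ 2) ^ 3 ≤
      (∑ i ∈ s, f i ^ 2) * ((∑ i ∈ s, f i) ^ 2 * ∑ i ∈ s, f i ^ 4) :=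
    calc _ = ((∑ i ∈ s, f i ^ 2) ^ 2) ^ 2 := by ring
      _ ≤ ((∑ i ∈ s, f i) * ∑ i ∈ s, f i ^ 3) ^ 2 := pow_le_pow_left₀ (sq_nonneg _) h₁ 2
      _ = (∑ i ∈ s, f i) ^ 2 * (∑ i ∈ s, f i ^ 3) ^ 2 := by ring
      _ ≤ (∑ i ∈ s, f i) ^ 2 * ((∑ i ∈ s, f i ^ 2) * ∑ i ∈ s, f i ^ 4) := by gcongr
      _ = _ := by ring
  rcases hsq.eq_or_lt with h0 | hpos
  · rw [← h0, zero_pow three_ne_zero]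
    exact mul_nonneg (sq_nonneg _) (sum_nonneg fun i hi => pow_nonneg (hf i hi) 4)
  · exact le_of_mul_le_mul_left h hpos

theorem sum_sq_le_three_mul_sq_mean_abs_rademacherSum {n : ℕ} (a : Fin n → ℝ) :
    ∑ t, a t ^ 2 ≤ 3 * ((∑ y, |rademacherSum a y|) / 2 ^ n) ^ 2 := by
  set σ := ∑ t, a t ^ 2
  set A := ∑ y, |rademacherSum a y|
  have hσ : 0 ≤ σ := by positivity
  have hsq : ∑ y, |rademacherSum a y| ^ 2 = 2 ^ n * σ := by
    simp only [sq_abs]; exact sum_rademacherSum_sq a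
  have hfour : ∑ y, |rademacherSum a y| ^ 4 ≤ 3 * 2 ^ n * σ ^ 2 := by
    simp only [Even.pow_abs ⟨2, rfl⟩]; exact sum_rademacherSum_pow_four_le a
  have h : (2 ^ n * σ) ^ 3 ≤ A ^ 2 * (3 * 2 ^ n * σ ^ 2) :=
    hsq ▸ (sum_sq_pow_three_le univ fun y _ => abs_nonneg _).trans (by gcongr)
  rcases hσ.eq_or_lt with h0 | hpos
  · rw [← h0]; positivity
  · rw [div_pow, ← mul_div_assoc, le_div_iff₀ (by positivity)]
    refine le_of_mul_le_mul_left ?_ (by positivity : (0 : ℝ) < 2 ^ n * σ ^ 2)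
    calc 2 ^ n * σ ^ 2 * (σ * (2 ^ n) ^ 2) = (2 ^ n * σ) ^ 3 := by ring
      _ ≤ A ^ 2 * (3 * 2 ^ n * σ ^ 2) := h
      _ = 2 ^ n * σ ^ 2 * (3 * A ^ 2) := by ring

theorem sum_abs_rademacherSum_le {n : ℕ} (a : Fin n → ℝ) :
    ∑ y, |rademacherSum a y| ≤
      2 * ∑ y : Fin n → Bool, |∑ t, (if y t then (1 : ℝ) else 0) * a t| := by
  set S : (Fin n → Bool) → ℝ := fun y => ∑ t, (if y t then (1 : ℝ) else 0) * a t
  have hdiff (y : Fin n → Bool) : rademacherSum a y = S y - S (fun t => !y t) := by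
    simp only [rademacherSum, S, ← sum_sub_distrib]
    refine sum_congr rfl fun t _ => ?_
    by_cases h : y t <;> simp [boolSign, h]
  have hflip : ∑ y : Fin n → Bool, |S (fun t => !y t)| = ∑ y, |S y| :=
    Fintype.sum_bijective _
      (Function.Involutive.bijective (f := fun y : Fin n → Bool => fun t => !y t) fun y => by simp)
      _ _ fun _ => rfl
  calc ∑ y, |rademacherSum a y| ≤ ∑ y, (|S y| + |S (fun t => !y t)|) :=
        sum_le_sum fun y _ => (hdiff y).symm ▸ abs_sub _ _
    _ = 2 * ∑ y, |S y| := by rw [sum_add_distrib, hflip]; ring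

theorem sq_mul_card_le_sum_sq {ι : Type*} [Fintype ι] (a : ι → ℝ) {c : ℝ} (hc : 0 ≤ c) :
    c ^ 2 * #{t | c ≤ |a t|} ≤ ∑ t, a t ^ 2 :=
  calc c ^ 2 * #{t | c ≤ |a t|} = ∑ t ∈ {t | c ≤ |a t|}, c ^ 2 := by
        rw [sum_const, nsmul_eq_mul, mul_comm]
    _ ≤ ∑ t ∈ {t | c ≤ |a t|}, a t ^ 2 :=
        sum_le_sum fun t ht => by
          simpa only [sq_abs] using pow_le_pow_left₀ hc (mem_filter.1 ht).2 2
    _ ≤ ∑ t, a t ^ 2 := sum_le_univ_sum_of_nonneg fun t => sq_nonneg _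

/-- Anticoncentration of the subsampled bias: for `x ∈ {0,1}^T`, `p ∈ [0,1]^T`, and
`N = #{t : |x_t - p_t| ≥ 1/2}`, averaging over uniform `y ∈ {0,1}^T` gives
`E_y[|∑_t y_t (x_t - p_t)|] ≥ c √N` for a universal constant `c > 0`. -/
theorem subsampled_bias_anticoncentration :
    ∃ c : ℝ, 0 < c ∧
      ∀ (T : ℕ) (x p : Fin T → ℝ),
        (∀ t, x t = 0 ∨ x t = 1) →
        (∀ t, p t ∈ Set.Icc (0:ℝ) 1) →
        (∑ y : Fin T → Bool, |∑ t, (if y t then (1:ℝ) else 0) * (x t - p t)|) / 2^T ≥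
          c * Real.sqrt ((Finset.univ.filter fun t => 1/2 ≤ |x t - p t|).card) := by
  refine ⟨1 / 7, by norm_num, fun T x p _ _ => ?_⟩
  set a : Fin T → ℝ := fun t => x t - p t
  set E := (∑ y : Fin T → Bool, |∑ t, (if y t then (1 : ℝ) else 0) * a t|) / 2 ^ T
  set M := (∑ y, |rademacherSum a y|) / 2 ^ T
  have hsymm : M ≤ 2 * E := by
    rw [div_le_iff₀ (by positivity), mul_assoc, div_mul_cancel₀ _ (by positivity)]
    exact sum_abs_rademacherSum_le a
  have hcount := sq_mul_card_le_sum_sq a (c := 1 / 2) (by norm_num)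
  rw [ge_iff_le, ← le_div_iff₀' (by norm_num), Real.sqrt_le_iff]
  refine ⟨by positivity, ?_⟩
  calc (#{t | 1 / 2 ≤ |a t|} : ℝ) ≤ 4 * ∑ t, a t ^ 2 := by linarith
    _ ≤ 12 * M ^ 2 := by linarith [sum_sq_le_three_mul_sq_mean_abs_rademacherSum a]
    _ ≤ 12 * (2 * E) ^ 2 := by gcongr
    _ ≤ (E / (1 / 7)) ^ 2 := by nlinarith [sq_nonneg E]
end
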